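/- Let K be the algebraic closure of ℚ and let R = ℚ{X,Y,Z}/⟨XY − YX − Y, XZ − ZX, YZ − ZY⟩, the enveloping algebra of a solvable-but-not-nilpotent Lie algebra, presented as a quotient of the free associative ℚ-algebra on X, Y, Z. Then R has a nonsplit extension of inequivalent one-dimensional representations: there exists a ℚ-algebra homomorphism ρ : R → E_{(1,1)}(K) (upper triangular 2×2 matrices over K) whose two diagonal characters π_1ρ and π_1'ρ are distinct and which is not semisimple. -/

import Mathlib

open Matrix

noncomputable section

/-- The `n × n` matrix with `1`s on the superdiagonal and `0`s elsewhere. -/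
def supDiag (K : Type*) [Semiring K] (n : ℕ) : Matrix (Fin n) (Fin n) K :=
  Matrix.of fun i j => if (i : ℕ) + 1 = (j : ℕ) then 1 else 0

/-- The `n × n` matrix with `1`s on the subdiagonal and `0`s elsewhere. -/
def subDiag (K : Type*) [Semiring K] (n : ℕ) : Matrix (Fin n) (Fin n) K :=
  (supDiag K n).transpose

/-- Block index function for the `(ℓ, m)` block decomposition of `Fin (ℓ + m)`. -/
def blkIdx (ℓ m : ℕ) (i : Fin (ℓ + m)) : ℕ := if (i : ℕ) < ℓ then 0 else 1

/-- `E_{(ℓ,m)}(K)`: the `K`-subalgebra of `M_{ℓ+m}(K)` of block upper triangular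
matrices `[[a, b], [0, c]]` with `a ∈ M_ℓ(K)`, `b ∈ M_{ℓ×m}(K)`, `c ∈ M_m(K)`. -/
def Eblk (K : Type*) [CommRing K] (ℓ m : ℕ) :
    Subalgebra K (Matrix (Fin (ℓ + m)) (Fin (ℓ + m)) K) where
  carrier := { M | M.BlockTriangular (blkIdx ℓ m) }
  mul_mem' ha hb := ha.mul hb
  add_mem' ha hb := ha.add hb
  one_mem' := Matrix.blockTriangular_one
  algebraMap_mem' r := fun i j hij => by
    rw [Matrix.algebraMap_matrix_apply, if_neg]
    rintro rfl
    exact lt_irrefl _ hij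

/-- `T_{(ℓ,m)}(K)`: the set of block matrices `[[0, b], [0, 0]]` with `b ∈ M_{ℓ×m}(K)`. -/
def Tblk (K : Type*) [Semiring K] (ℓ m : ℕ) : Set (Matrix (Fin (ℓ + m)) (Fin (ℓ + m)) K) :=
  { M | ∀ i j : Fin (ℓ + m), ¬((i : ℕ) < ℓ ∧ ℓ ≤ (j : ℕ)) → M i j = 0 }

/-- `π_ℓ`: the upper-left `ℓ × ℓ` block of an `(ℓ+m) × (ℓ+m)` matrix. -/
def blkL (K : Type*) [Semiring K] (ℓ m : ℕ) (M : Matrix (Fin (ℓ + m)) (Fin (ℓ + m)) K) :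
    Matrix (Fin ℓ) (Fin ℓ) K :=
  Matrix.of fun i j => M (Fin.castAdd m i) (Fin.castAdd m j)

/-- `π_m`: the lower-right `m × m` block of an `(ℓ+m) × (ℓ+m)` matrix. -/
def blkR (K : Type*) [Semiring K] (ℓ m : ℕ) (M : Matrix (Fin (ℓ + m)) (Fin (ℓ + m)) K) :
    Matrix (Fin m) (Fin m) K :=
  Matrix.of fun i j => M (Fin.natAdd ℓ i) (Fin.natAdd ℓ j)

/-- The block matrix `I_ℓ = [[1, 0], [0, 0]]` inside `M_{ℓ+m}(K)`. -/
def idL (K : Type*) [Semiring K] (ℓ m : ℕ) : Matrix (Fin (ℓ + m)) (Fin (ℓ + m)) K :=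
  Matrix.of fun i j => if i = j ∧ (i : ℕ) < ℓ then 1 else 0

/-- The defining relations of the enveloping algebra of the two-generated
solvable-but-not-nilpotent Lie algebra (plus a central generator):
`XY - YX = Y`, `XZ = ZX`, `YZ = ZY`. -/
inductive solvRel : FreeAlgebra ℚ (Fin 3) → FreeAlgebra ℚ (Fin 3) → Prop
  | xy : solvRel (FreeAlgebra.ι ℚ 0 * FreeAlgebra.ι ℚ 1 -
      FreeAlgebra.ι ℚ 1 * FreeAlgebra.ι ℚ 0) (FreeAlgebra.ι ℚ 1)
  | xz : solvRel (FreeAlgebra.ι ℚ 0 * FreeAlgebra.ι ℚ 2)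
      (FreeAlgebra.ι ℚ 2 * FreeAlgebra.ι ℚ 0)
  | yz : solvRel (FreeAlgebra.ι ℚ 1 * FreeAlgebra.ι ℚ 2)
      (FreeAlgebra.ι ℚ 2 * FreeAlgebra.ι ℚ 1)
/-! The assignment `X ↦ E₁₁`, `Y ↦ E₁₂`, `Z ↦ 0` respects the relations because
`[E₁₁, E₁₂] = E₁₂`, and its diagonal characters differ at `X`. Its image contains `E₁₂`, and
`E₁₂ s E₁₂ = 0` for every upper triangular `s`. In any ring an element `x` with `x R x = 0` lies
in the Jacobson radical, which vanishes in a semisimple ring; since `E₁₂ ≠ 0`, the algebra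
generated by the image is not semisimple. -/

theorem IsSemisimpleRing.eq_zero_of_mul_mul_eq_zero {R : Type*} [Ring R] [IsSemisimpleRing R]
    {x : R} (hx : ∀ y, x * y * x = 0) : x = 0 := by
  have hJ : x ∈ Ring.jacobson R := by
    rw [← Ideal.jacobson_bot, Ideal.mem_jacobson_iff]
    refine fun y ↦ ⟨1 - y * x, ?_⟩
    rw [Submodule.mem_bot]
    calc (1 - y * x) * y * x + (1 - y * x) - 1 = -(y * (x * y * x)) := by noncomm_ring
      _ = 0 := by rw [hx, mul_zero, neg_zero]
  simpa [IsSemisimpleRing.jacobson_eq_bot] using hJ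

section

variable (K : Type*) [CommRing K]

theorem mem_Eblk_one_one_iff {M : Matrix (Fin (1 + 1)) (Fin (1 + 1)) K} :
    M ∈ Eblk K 1 1 ↔ M 1 0 = 0 := by
  refine ⟨fun h ↦ h (by simp [blkIdx]), fun h i j hij ↦ ?_⟩
  fin_cases i <;> fin_cases j <;> simp_all [blkIdx]

theorem not_isSemisimpleRing_of_le_Eblk [Nontrivial K]
    {S : Subalgebra K (Matrix (Fin (1 + 1)) (Fin (1 + 1)) K)}
    (hS : S ≤ Eblk K 1 1) (h : single 0 1 1 ∈ S) : ¬ IsSemisimpleRing S := by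
  intro hss
  have hsand (s : S) : (⟨_, h⟩ : S) * s * ⟨_, h⟩ = 0 := by
    ext1
    simp [(mem_Eblk_one_one_iff K).1 (hS s.2)]
  have := congrArg Subtype.val (IsSemisimpleRing.eq_zero_of_mul_mul_eq_zero hsand)
  simpa using congrFun (congrFun this 0) 1

variable [Algebra ℚ K]

def solvRepGen : Fin 3 → Eblk K 1 1 :=
  ![⟨single 0 0 1, by simp [mem_Eblk_one_one_iff]⟩,
    ⟨single 0 1 1, by simp [mem_Eblk_one_one_iff]⟩, 0]

theorem solvRepGen_rel ⦃x y : FreeAlgebra ℚ (Fin 3)⦄ (h : solvRel x y) :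
    FreeAlgebra.lift ℚ (solvRepGen K) x = FreeAlgebra.lift ℚ (solvRepGen K) y := by
  cases h <;> ext1 <;> simp [solvRepGen]

def solvRep : RingQuot solvRel →ₐ[ℚ] Eblk K 1 1 :=
  RingQuot.liftAlgHom ℚ ⟨FreeAlgebra.lift ℚ (solvRepGen K), solvRepGen_rel K⟩

theorem solvRep_X :
    (solvRep K (RingQuot.mkAlgHom ℚ solvRel (FreeAlgebra.ι ℚ 0)) :
      Matrix (Fin (1 + 1)) (Fin (1 + 1)) K) = single 0 0 1 := by
  simp [solvRep, solvRepGen]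

theorem solvRep_Y :
    (solvRep K (RingQuot.mkAlgHom ℚ solvRel (FreeAlgebra.ι ℚ 1)) :
      Matrix (Fin (1 + 1)) (Fin (1 + 1)) K) = single 0 1 1 := by
  simp [solvRep, solvRepGen]

end

/-- The algebra `ℚ{X,Y,Z}/⟨XY−YX−Y, XZ−ZX, YZ−ZY⟩` has a nonsplit extension
of inequivalent one-dimensional representations: a representation `ρ : R → E_{(1,1)}(K)`
with distinct diagonal characters which is not semisimple. -/
theorem stmt19 :
    ∃ ρ : RingQuot solvRel →ₐ[ℚ]
        Matrix (Fin (1 + 1)) (Fin (1 + 1)) (AlgebraicClosure ℚ),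
      (∀ a, ρ a ∈ Eblk (AlgebraicClosure ℚ) 1 1) ∧
      (∃ a, ρ a ⟨0, by omega⟩ ⟨0, by omega⟩ ≠ ρ a ⟨1, by omega⟩ ⟨1, by omega⟩) ∧
      ¬ IsSemisimpleRing (Algebra.adjoin (AlgebraicClosure ℚ) (Set.range ρ)) := by
  let K := AlgebraicClosure ℚ
  let ρ := ((Eblk K 1 1).val.restrictScalars ℚ).comp (solvRep K)
  have hρ (a) : ρ a ∈ Eblk K 1 1 := (solvRep K a).2
  refine ⟨ρ, hρ, ⟨RingQuot.mkAlgHom ℚ solvRel (FreeAlgebra.ι ℚ 0), ?_⟩, ?_⟩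
  · have hX : ρ _ = single 0 0 1 := solvRep_X K
    simp [hX]
  · refine not_isSemisimpleRing_of_le_Eblk K (Algebra.adjoin_le ?_) ?_
    · rintro _ ⟨a, rfl⟩
      exact hρ a
    · exact solvRep_Y K ▸ Algebra.subset_adjoin ⟨_, rfl⟩
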